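/- arXiv:2101.01746 — 2 statements merged into one kernel-verified Lean document; each statement's English description precedes it below -/
import Mathlib

section
/- Let ν be a finite positive Borel measure on 𝕋 supported on a closed set E ⊂ 𝕋, and let S_ν(z) = exp(−∫_𝕋 (ζ+z)/(ζ−z) dν(ζ)) be the associated singular inner function. Then for every positive integer k there is a constant D_k > 0 such that for all z ∈ 𝕋 \ E (where S_ν extends analytically), |S_ν^{(k)}(z)| ≤ D_k · δ_E(z)^{−2k}, where δ_E(z) is the distance from z to E. -/
open Metric MeasureTheory

noncomputable section

/-- The singular inner function associated with a finite positive Borel measure on the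
unit circle: `S_ν(z) = exp(−∫ (ζ+z)/(ζ−z) dν(ζ))`. -/
noncomputable def singularInner (ν : Measure ℂ) (z : ℂ) : ℂ :=
  Complex.exp (-∫ ζ, (ζ + z) / (ζ - z) ∂ν)

/-! `S_ν` is holomorphic off `E`, and `‖S_ν w‖ = exp ∫ (‖w‖² - 1) / ‖ζ - w‖² dν(ζ)`. If `z ∈ 𝕋` lies
at distance `δ` from `E`, then on the circle of radius `δ² / 4` about `z` we have `‖w‖² - 1 ≤ 3δ²/4`
and `‖ζ - w‖ ≥ δ / 2` for `ζ ∈ E`, so the integrand is at most `3` and `‖S_ν‖ ≤ exp (3 ν(𝕋))` there.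
Cauchy's estimate on that circle gives `‖S_ν^{(k)}(z)‖ ≤ k! 4^k exp (3 ν(𝕋)) δ^{-2k}`. -/

theorem Complex.re_add_div_sub (ζ w : ℂ) :
    ((ζ + w) / (ζ - w)).re = (‖ζ‖ ^ 2 - ‖w‖ ^ 2) / ‖ζ - w‖ ^ 2 := by
  rw [Complex.div_re, ← add_div, Complex.sq_norm, Complex.sq_norm, Complex.sq_norm]
  congr 1
  simp only [Complex.normSq_apply, Complex.add_re, Complex.add_im, Complex.sub_re, Complex.sub_im]
  ring

theorem Complex.hasDerivAt_add_div_sub {ζ x : ℂ} (h : ζ ≠ x) :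
    HasDerivAt (fun x ↦ (ζ + x) / (ζ - x)) (2 * ζ / (ζ - x) ^ 2) x := by
  exact (((hasDerivAt_id x).const_add ζ).div ((hasDerivAt_id x).const_sub ζ)
    (sub_ne_zero.mpr h)).congr_deriv (by simp only [id]; ring)

theorem half_infDist_le_infDist {α : Type*} [PseudoMetricSpace α] {E : Set α} {z w : α}
    (hw : dist w z ≤ infDist z E / 2) : infDist z E / 2 ≤ infDist w E := by
  have := infDist_le_infDist_add_dist (x := z) (y := w) (s := E)
  rw [dist_comm] at this
  linarith

theorem half_infDist_le_norm_sub {E : Set ℂ} {z w ζ : ℂ} (hζ : ζ ∈ E)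
    (hw : dist w z ≤ infDist z E / 2) : infDist z E / 2 ≤ ‖ζ - w‖ :=
  (half_infDist_le_infDist hw).trans <| (infDist_le_dist_of_mem hζ).trans_eq <| by
    rw [dist_comm, dist_eq_norm]

theorem norm_exp_neg_integral_le {α : Type*} [MeasurableSpace α] {μ : Measure α}
    [IsFiniteMeasure μ] {f : α → ℂ} (hf : Integrable f μ) {c : ℝ}
    (hc : ∀ᵐ x ∂μ, -(f x).re ≤ c) :
    ‖Complex.exp (-∫ x, f x ∂μ)‖ ≤ Real.exp (μ.real Set.univ * c) := by
  rw [Complex.norm_exp, Real.exp_le_exp, Complex.neg_re, ← RCLike.re_eq_complex_re,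
    ← integral_re hf, ← integral_neg, ← smul_eq_mul, ← integral_const]
  exact integral_mono_ae hf.re.neg (integrable_const c) hc

theorem neg_re_add_div_sub_le {ζ w : ℂ} (hζ : ‖ζ‖ = 1) {r d : ℝ} (hr : 0 ≤ r) (hr₁ : r ≤ 1)
    (hw : ‖w‖ ≤ 1 + r) (hd : 0 < d) (hdw : d ≤ ‖ζ - w‖) :
    -((ζ + w) / (ζ - w)).re ≤ 3 * r / d ^ 2 := by
  have hnum : ‖w‖ ^ 2 - 1 ≤ 3 * r := by nlinarith [norm_nonneg w]
  rw [Complex.re_add_div_sub, hζ, ← neg_div, neg_sub, one_pow]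
  calc (‖w‖ ^ 2 - 1) / ‖ζ - w‖ ^ 2 ≤ 3 * r / ‖ζ - w‖ ^ 2 := by gcongr
    _ ≤ 3 * r / d ^ 2 := by gcongr

section HerglotzIntegral

variable {ν : Measure ℂ} [IsFiniteMeasure ν] {E : Set ℂ}

theorem integrable_add_div_sub (hE : E ⊆ sphere 0 1) (hν : ∀ᵐ ζ ∂ν, ζ ∈ E) {z : ℂ}
    (hz : 0 < infDist z E) : Integrable (fun ζ ↦ (ζ + z) / (ζ - z)) ν := by
  refine Integrable.mono' (integrable_const ((1 + ‖z‖) / (infDist z E / 2)))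
    (by fun_prop : Measurable fun ζ : ℂ ↦ (ζ + z) / (ζ - z)).aestronglyMeasurable ?_
  filter_upwards [hν] with ζ hζ
  rw [norm_div]
  gcongr
  · calc ‖ζ + z‖ ≤ ‖ζ‖ + ‖z‖ := norm_add_le _ _
      _ = 1 + ‖z‖ := by rw [mem_sphere_zero_iff_norm.mp (hE hζ)]
  · exact half_infDist_le_norm_sub hζ (by simpa using half_pos hz |>.le)

theorem hasDerivAt_integral_add_div_sub (hE : E ⊆ sphere 0 1) (hν : ∀ᵐ ζ ∂ν, ζ ∈ E) {z : ℂ}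
    (hz : 0 < infDist z E) :
    HasDerivAt (fun x ↦ ∫ ζ, (ζ + x) / (ζ - x) ∂ν) (∫ ζ, 2 * ζ / (ζ - z) ^ 2 ∂ν) z := by
  have hball : ∀ ζ ∈ E, ∀ x ∈ ball z (infDist z E / 2), infDist z E / 2 ≤ ‖ζ - x‖ :=
    fun ζ hζ x hx ↦ half_infDist_le_norm_sub hζ (mem_ball.mp hx).le
  refine (hasDerivAt_integral_of_dominated_loc_of_deriv_le
    (F := fun x ζ ↦ (ζ + x) / (ζ - x)) (F' := fun x ζ ↦ 2 * ζ / (ζ - x) ^ 2)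
    (bound := fun _ ↦ 2 / (infDist z E / 2) ^ 2) (ball_mem_nhds z (half_pos hz))
    (.of_forall fun x ↦
      (by fun_prop : Measurable fun ζ : ℂ ↦ (ζ + x) / (ζ - x)).aestronglyMeasurable)
    (integrable_add_div_sub hE hν hz)
    (by fun_prop : Measurable fun ζ : ℂ ↦ 2 * ζ / (ζ - z) ^ 2).aestronglyMeasurable
    ?_ (integrable_const _) ?_).2
  · filter_upwards [hν] with ζ hζ x hx
    rw [norm_div, norm_mul, norm_pow, mem_sphere_zero_iff_norm.mp (hE hζ)]
    gcongr
    · norm_num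
    · exact hball ζ hζ x hx
  · filter_upwards [hν] with ζ hζ x hx
    refine Complex.hasDerivAt_add_div_sub fun h ↦ ?_
    have := hball ζ hζ x hx
    rw [h, sub_self, norm_zero] at this
    linarith

theorem differentiableAt_singularInner (hE : E ⊆ sphere 0 1) (hν : ∀ᵐ ζ ∂ν, ζ ∈ E) {z : ℂ}
    (hz : 0 < infDist z E) : DifferentiableAt ℂ (singularInner ν) z :=
  (hasDerivAt_integral_add_div_sub hE hν hz).differentiableAt.neg.cexp

theorem norm_iteratedDeriv_singularInner_le (hE : E ⊆ sphere 0 1) (hν : ∀ᵐ ζ ∂ν, ζ ∈ E)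
    {z : ℂ} (hz : ‖z‖ = 1) (hδ : 0 < infDist z E) (hδ₂ : infDist z E ≤ 2) (k : ℕ) :
    ‖iteratedDeriv k (singularInner ν) z‖ ≤
      k.factorial * 4 ^ k * Real.exp (ν.real Set.univ * 3) / infDist z E ^ (2 * k) := by
  set δ := infDist z E
  set r := δ ^ 2 / 4 with hr
  have hr₀ : 0 < r := by positivity
  have hr_half : r ≤ δ / 2 := by nlinarith
  have hr₁ : r ≤ 1 := by nlinarith
  have hdiff : DiffContOnCl ℂ (singularInner ν) (ball z r) := by
    refine DifferentiableOn.diffContOnCl ?_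
    rw [closure_ball z hr₀.ne']
    intro w hw
    exact (differentiableAt_singularInner hE hν <| (half_pos hδ).trans_le <|
      half_infDist_le_infDist ((mem_closedBall.mp hw).trans hr_half)).differentiableWithinAt
  have hbound : ∀ w ∈ sphere z r, ‖singularInner ν w‖ ≤ Real.exp (ν.real Set.univ * 3) := by
    intro w hw
    have hwz : dist w z ≤ δ / 2 := (mem_sphere.mp hw).trans_le hr_half
    refine norm_exp_neg_integral_le
      (integrable_add_div_sub hE hν ((half_pos hδ).trans_le (half_infDist_le_infDist hwz))) ?_
    filter_upwards [hν] with ζ hζ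
    calc -((ζ + w) / (ζ - w)).re ≤ 3 * r / (δ / 2) ^ 2 :=
          neg_re_add_div_sub_le (mem_sphere_zero_iff_norm.mp (hE hζ)) hr₀.le hr₁
            (hz ▸ norm_le_norm_add_const_of_dist_le (mem_sphere.mp hw).le) (half_pos hδ)
            (half_infDist_le_norm_sub hζ hwz)
      _ = 3 := by field_simp; ring
  calc ‖iteratedDeriv k (singularInner ν) z‖
      ≤ k.factorial * Real.exp (ν.real Set.univ * 3) / r ^ k :=
        Complex.norm_iteratedDeriv_le_of_forall_mem_sphere_norm_le k hr₀ hdiff hbound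
    _ = k.factorial * 4 ^ k * Real.exp (ν.real Set.univ * 3) / δ ^ (2 * k) := by
        rw [hr, div_pow, pow_mul]
        field_simp

end HerglotzIntegral

/-- Derivative bounds for a singular inner function near its singular support: for each
`k ≥ 1` there is `D_k > 0` with `|S_ν^{(k)}(z)| ≤ D_k δ_E(z)^{−2k}` for `z ∈ 𝕋 \ E`. -/
theorem singularInner_deriv_bound (ν : Measure ℂ) [IsFiniteMeasure ν]
    (E : Set ℂ) (hEclosed : IsClosed E) (hEsub : E ⊆ sphere (0:ℂ) 1)
    (hsupp : ν Eᶜ = 0) :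
    ∀ k : ℕ, 0 < k → ∃ D > (0:ℝ), ∀ z ∈ sphere (0:ℂ) 1 \ E,
      ‖iteratedDeriv k (singularInner ν) z‖ ≤ D / (infDist z E) ^ (2 * k) := by
  intro k hk
  rcases E.eq_empty_or_nonempty with rfl | hne
  · have hν : ν = 0 := Measure.measure_univ_eq_zero.mp (by simpa using hsupp)
    have hS : singularInner ν = fun _ ↦ 1 := by ext; simp [singularInner, hν]
    refine ⟨1, one_pos, fun z _ ↦ ?_⟩
    simp [hS, iteratedDeriv_const, hk.ne']
  refine ⟨k.factorial * 4 ^ k * Real.exp (ν.real Set.univ * 3), by positivity, ?_⟩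
  rintro z ⟨hz, hzE⟩
  have hz₁ : ‖z‖ = 1 := mem_sphere_zero_iff_norm.mp hz
  have hδ₂ : infDist z E ≤ 2 := by
    obtain ⟨ζ, hζ⟩ := hne
    calc infDist z E ≤ dist z ζ := infDist_le_dist_of_mem hζ
      _ ≤ ‖z‖ + ‖ζ‖ := dist_le_norm_add_norm z ζ
      _ = 2 := by rw [hz₁, mem_sphere_zero_iff_norm.mp (hEsub hζ)]; norm_num
  exact norm_iteratedDeriv_singularInner_le hEsub (ae_iff.mpr hsupp) hz₁
    ((hEclosed.notMem_iff_infDist_pos hne).mp hzE) hδ₂ k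
end
end

section
/- Let 1 < p < ∞ and q = p/(p−1). There is a constant C_p > 0 such that for all f holomorphic on 𝔻 with f, f' ∈ L^p(𝔻, dA) and all g holomorphic on 𝔻 with g ∈ L^q(𝔻, dA), one has sup_{0<r<1} | ∫_𝕋 f(rζ) conj(g(rζ)) dm(ζ) | ≤ C_p (‖f‖_{L^p} + ‖f'‖_{L^p}) ‖g‖_{L^q}. -/
/-!
Write `u = f · conj g`. For holomorphic `f` and `g` the Cauchy–Riemann equations in polar
coordinates turn the radial derivative of `t² u(t e^{iθ})` into `2t (f + z f') conj g` plus an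
exact `θ`-derivative, which integrates to zero over the circle. Integrating in `t` and passing to
polar coordinates gives
`π r² ⨍_{|z| = r} f conj g = ∫_{|z| < r} (f + z f') conj g dx dy`.
For `r ≥ 1/2`, Hölder's inequality bounds the right-hand side by
`π ‖f + z f'‖_p ‖g‖_q ≤ π (‖f‖_p + ‖f'‖_p) ‖g‖_q`, since `|z| < 1` on the disc. For `r < 1/2`,
the mean value property on discs of radius `1/2` bounds `f` and `g` on the circle of radius `r`
by their `L¹(dA)` norms, which are at most their `L^p` and `L^q` norms.
-/

open Metric MeasureTheory Complex

noncomputable section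

/-- The normalized area measure `dA` on the unit disc `𝔻` (total mass one). -/
noncomputable def discMeasure : Measure ℂ :=
  (ENNReal.ofReal Real.pi)⁻¹ • (volume.restrict (ball (0:ℂ) 1))

/-- The pairing `∫_𝕋 f(rζ) conj(g(rζ)) dm(ζ)` of the dilations of `f` and `g`. -/
noncomputable def circlePairing (f g : ℂ → ℂ) (r : ℝ) : ℂ :=
  (2 * Real.pi)⁻¹ • ∫ θ in (0:ℝ)..(2 * Real.pi),
    f (r * Complex.exp (θ * Complex.I)) *
      (starRingEnd ℂ) (g (r * Complex.exp (θ * Complex.I)))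

open Real Set ComplexConjugate
open scoped ENNReal

section CircleAverage

variable {E : Type*} [NormedAddCommGroup E] [NormedSpace ℝ E]

theorem polarCoord_symm_eq_circleMap (p : ℝ × ℝ) :
    Complex.polarCoord.symm p = circleMap 0 p.1 p.2 := by
  simp [circleMap_zero, exp_mul_I]

theorem intervalIntegral_comp_circleMap_neg_pi (φ : ℂ → E) (c : ℂ) (t : ℝ) :
    ∫ θ in -π..π, φ (circleMap c t θ) = (2 * π) • circleAverage φ c t := by
  have := ((periodic_circleMap c t).comp φ).intervalIntegral_add_eq (-π) 0
  rw [circleAverage_def, smul_inv_smul₀ (by positivity)]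
  simpa [show -π + 2 * π = π by ring] using this

theorem integral_ball_zero_eq_intervalIntegral_circleAverage {φ : ℂ → E} {R : ℝ} (hR : 0 ≤ R)
    (hφ : ContinuousOn φ (closedBall 0 R)) :
    ∫ z in ball 0 R, φ z = ∫ t in 0..R, (2 * π * t) • circleAverage φ 0 t := by
  have hind : ∀ p : ℝ × ℝ, p.1 • (ball (0:ℂ) R).indicator φ (Complex.polarCoord.symm p) =
      (Ioo (-R) R ×ˢ univ).indicator (fun p => p.1 • φ (circleMap 0 p.1 p.2)) p := by
    intro p
    rw [polarCoord_symm_eq_circleMap]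
    simp only [indicator, mem_ball_zero_iff, norm_circleMap_zero, mem_prod, mem_Ioo,
      mem_univ, and_true, ← abs_lt]
    split_ifs <;> simp
  have hcont : ContinuousOn (fun p : ℝ × ℝ => p.1 • φ (circleMap 0 p.1 p.2))
      (Icc 0 R ×ˢ Icc (-π) π) := by
    refine continuous_fst.continuousOn.smul (hφ.comp (by fun_prop) ?_)
    rintro ⟨t, θ⟩ ⟨⟨ht0, htR⟩, -⟩
    simpa [abs_of_nonneg ht0] using htR
  have hint : IntegrableOn (fun p : ℝ × ℝ => p.1 • φ (circleMap 0 p.1 p.2))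
      (Ioo 0 R ×ˢ Ioo (-π) π) (volume.prod volume) :=
    (hcont.integrableOn_compact (isCompact_Icc.prod isCompact_Icc)).mono_set
      (prod_mono Ioo_subset_Icc_self Ioo_subset_Icc_self)
  have hangle : ∀ t : ℝ, ∫ θ in Ioo (-π) π, t • φ (circleMap 0 t θ) =
      (2 * π * t) • circleAverage φ 0 t := by
    intro t
    rw [← integral_Ioc_eq_integral_Ioo,
      ← intervalIntegral.integral_of_le (by linarith [pi_pos]), intervalIntegral.integral_smul,
      intervalIntegral_comp_circleMap_neg_pi, smul_smul, mul_comm t]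
  calc ∫ z in ball 0 R, φ z
      = ∫ p in Ioi 0 ×ˢ Ioo (-π) π,
          p.1 • (ball (0:ℂ) R).indicator φ (Complex.polarCoord.symm p) := by
        rw [← integral_indicator measurableSet_ball, ← Complex.integral_comp_polarCoord_symm,
          polarCoord_target]
    _ = ∫ p in Ioo 0 R ×ˢ Ioo (-π) π, p.1 • φ (circleMap 0 p.1 p.2) := by
        simp_rw [hind]
        rw [setIntegral_indicator (measurableSet_Ioo.prod MeasurableSet.univ), prod_inter_prod,
          Ioi_inter_Ioo, inter_univ, max_eq_left (by linarith)]
    _ = ∫ t in Ioo 0 R, (2 * π * t) • circleAverage φ 0 t := by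
        rw [Measure.volume_eq_prod, setIntegral_prod _ hint]
        simp_rw [hangle]
    _ = ∫ t in 0..R, (2 * π * t) • circleAverage φ 0 t := by
        rw [intervalIntegral.integral_of_le hR, integral_Ioc_eq_integral_Ioo]

theorem integral_ball_eq_intervalIntegral_circleAverage {φ : ℂ → E} {c : ℂ} {R : ℝ}
    (hR : 0 ≤ R) (hφ : ContinuousOn φ (closedBall c R)) :
    ∫ z in ball c R, φ z = ∫ t in 0..R, (2 * π * t) • circleAverage φ c t := by
  have htrans : ∫ z in ball c R, φ z = ∫ z in ball 0 R, φ (z + c) := by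
    rw [← (measurePreserving_add_right volume c).setIntegral_preimage_emb
      (measurableEmbedding_addRight c), preimage_add_right_ball, sub_self]
  have hφc : ContinuousOn (fun z => φ (z + c)) (closedBall 0 R) :=
    hφ.comp (by fun_prop) fun z hz => by simpa [dist_eq_norm] using hz
  simp_rw [htrans, integral_ball_zero_eq_intervalIntegral_circleAverage hR hφc,
    circleAverage_map_add_const]

theorem norm_circleAverage_le {φ : ℂ → E} {c : ℂ} {R C : ℝ}
    (hφ : ∀ z ∈ sphere c |R|, ‖φ z‖ ≤ C) : ‖circleAverage φ c R‖ ≤ C := by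
  rw [circleAverage_def, norm_smul, Real.norm_of_nonneg (by positivity)]
  calc (2 * π)⁻¹ * ‖∫ θ in 0..2 * π, φ (circleMap c R θ)‖
        ≤ (2 * π)⁻¹ * (C * |2 * π - 0|) := by
        gcongr
        exact intervalIntegral.norm_integral_le_of_norm_le_const
          fun θ _ => hφ _ (circleMap_mem_sphere' c R θ)
    _ = C := by
        rw [sub_zero, abs_of_pos two_pi_pos]
        field_simp

theorem intervalIntegral_sub_eq_integral_integral_of_hasDerivAt [CompleteSpace E]
    {Φ Ψ A B : ℝ → ℝ → E} {a b c d : ℝ} (hab : a ≤ b) (hcd : c ≤ d)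
    (hΦ : ∀ x ∈ Icc a b, ∀ y ∈ Icc c d, HasDerivAt (Φ · y) (A x y + B x y) x)
    (hΨ : ∀ x ∈ Icc a b, ∀ y ∈ Icc c d, HasDerivAt (Ψ x) (B x y) y)
    (hΨcd : ∀ x ∈ Icc a b, Ψ x d = Ψ x c)
    (hA : ContinuousOn (fun p : ℝ × ℝ => A p.1 p.2) (Icc a b ×ˢ Icc c d))
    (hB : ContinuousOn (fun p : ℝ × ℝ => B p.1 p.2) (Icc a b ×ˢ Icc c d)) :
    ∫ y in c..d, (Φ b y - Φ a y) = ∫ x in a..b, ∫ y in c..d, A x y := by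
  have hAB : ContinuousOn (fun p : ℝ × ℝ => A p.1 p.2 + B p.1 p.2) (Icc a b ×ˢ Icc c d) :=
    hA.add hB
  have slice_x : ∀ {F : ℝ → ℝ → E},
      ContinuousOn (fun p : ℝ × ℝ => F p.1 p.2) (Icc a b ×ˢ Icc c d) →
      ∀ y ∈ Icc c d, IntervalIntegrable (F · y) volume a b := fun hF y hy =>
    (hF.comp (by fun_prop) fun x hx => mk_mem_prod (uIcc_of_le hab ▸ hx) hy).intervalIntegrable
  have slice_y : ∀ {F : ℝ → ℝ → E},
      ContinuousOn (fun p : ℝ × ℝ => F p.1 p.2) (Icc a b ×ˢ Icc c d) →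
      ∀ x ∈ Icc a b, IntervalIntegrable (F x) volume c d := fun hF x hx =>
    (hF.comp (by fun_prop) fun y hy => mk_mem_prod hx (uIcc_of_le hcd ▸ hy)).intervalIntegrable
  calc ∫ y in c..d, (Φ b y - Φ a y)
      = ∫ y in c..d, ∫ x in a..b, (A x y + B x y) := by
        refine intervalIntegral.integral_congr fun y hy => ?_
        rw [uIcc_of_le hcd] at hy
        exact (intervalIntegral.integral_eq_sub_of_hasDerivAt
          (fun x hx => hΦ x (uIcc_of_le hab ▸ hx) y hy)
          (slice_x (F := fun x y => A x y + B x y) hAB y hy)).symm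
    _ = ∫ x in a..b, ∫ y in c..d, (A x y + B x y) := by
        refine (intervalIntegral_intervalIntegral_swap ?_).symm
        rw [uIoc_of_le hab, uIoc_of_le hcd]
        exact (hAB.integrableOn_compact (isCompact_Icc.prod isCompact_Icc)).mono_set
          (prod_mono Ioc_subset_Icc_self Ioc_subset_Icc_self)
    _ = ∫ x in a..b, ∫ y in c..d, A x y := by
        refine intervalIntegral.integral_congr fun x hx => ?_
        rw [uIcc_of_le hab] at hx
        rw [intervalIntegral.integral_add (slice_y hA x hx) (slice_y hB x hx),
          intervalIntegral.integral_eq_sub_of_hasDerivAt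
            (fun y hy => hΨ x hx y (uIcc_of_le hcd ▸ hy)) (slice_y hB x hx), hΨcd x hx, sub_self,
          add_zero]

end CircleAverage

section MeanValue

variable {E : Type*} [NormedAddCommGroup E] [NormedSpace ℂ E] [CompleteSpace E]

theorem DiffContOnCl.integral_ball_eq_smul {h : ℂ → E} {c : ℂ} {R : ℝ}
    (hh : DiffContOnCl ℂ h (ball c R)) (hR : 0 ≤ R) :
    ∫ z in ball c R, h z = (π * R ^ 2) • h c := by
  have hmean : ∀ t ∈ uIcc 0 R,
      (2 * π * t) • Real.circleAverage h c t = (2 * π * t) • h c := by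
    intro t ht
    rw [uIcc_of_le hR] at ht
    rw [(hh.mono (ball_subset_ball (by rw [abs_of_nonneg ht.1]; exact ht.2))).circleAverage]
  rw [integral_ball_eq_intervalIntegral_circleAverage hR hh.continuousOn_ball,
    intervalIntegral.integral_congr hmean, intervalIntegral.integral_smul_const,
    intervalIntegral.integral_const_mul, integral_id]
  ring_nf

theorem DiffContOnCl.norm_le_integral_ball {h : ℂ → E} {c : ℂ} {R : ℝ}
    (hh : DiffContOnCl ℂ h (ball c R)) (hR : 0 < R) :
    ‖h c‖ ≤ (π * R ^ 2)⁻¹ * ∫ z in ball c R, ‖h z‖ := by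
  rw [le_inv_mul_iff₀ (by positivity), ← norm_smul_of_nonneg (by positivity),
    ← hh.integral_ball_eq_smul hR.le]
  exact norm_integral_le_integral_norm _

end MeanValue

theorem hasDerivAt_comp_circleMap_radius {h : ℂ → ℂ} {c : ℂ} {t θ : ℝ}
    (hh : DifferentiableAt ℂ h (circleMap c t θ)) :
    HasDerivAt (fun s : ℝ => h (circleMap c s θ))
      (deriv h (circleMap c t θ) * exp (θ * I)) t := by
  have hγ : HasDerivAt (fun s : ℝ => circleMap c s θ) (exp (θ * I)) t := by
    simpa [circleMap] using ((hasDerivAt_id t).ofReal_comp.mul_const (exp (θ * I))).const_add c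
  exact hh.hasDerivAt.comp t hγ

theorem hasDerivAt_comp_circleMap_angle {h : ℂ → ℂ} {c : ℂ} {t θ : ℝ}
    (hh : DifferentiableAt ℂ h (circleMap c t θ)) :
    HasDerivAt (fun θ : ℝ => h (circleMap c t θ))
      (deriv h (circleMap c t θ) * (circleMap 0 t θ * I)) θ :=
  hh.hasDerivAt.comp θ (hasDerivAt_circleMap c t θ)

/-- The second summand is `t • I • ∂_θ (f · conj g)`: along circles, `t ∂_t = -I ∂_θ` on holomorphic
functions and `t ∂_t = I ∂_θ` on antiholomorphic ones. -/
theorem hasDerivAt_sq_smul_mul_conj_comp_circleMap {f g : ℂ → ℂ} {t θ : ℝ}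
    (hf : DifferentiableAt ℂ f (circleMap 0 t θ)) (hg : DifferentiableAt ℂ g (circleMap 0 t θ)) :
    HasDerivAt (fun s : ℝ => s ^ 2 • (f (circleMap 0 s θ) * conj (g (circleMap 0 s θ))))
      ((2 * t) • ((f (circleMap 0 t θ) + circleMap 0 t θ * deriv f (circleMap 0 t θ)) *
          conj (g (circleMap 0 t θ))) +
        t • (I * (deriv f (circleMap 0 t θ) * (circleMap 0 t θ * I) *
            conj (g (circleMap 0 t θ)) +
          f (circleMap 0 t θ) * conj (deriv g (circleMap 0 t θ) * (circleMap 0 t θ * I))))) t := by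
  refine (((hasDerivAt_id t).pow 2).smul ((hasDerivAt_comp_circleMap_radius hf).mul
    (hasDerivAt_comp_circleMap_radius hg).star)).congr_deriv ?_
  simp only [Pi.mul_apply, Pi.pow_apply, id, Complex.real_smul, Complex.star_def,
    map_mul, conj_ofReal, conj_I, circleMap_zero]
  push_cast
  linear_combination (t ^ 2 * f (t * exp (θ * I)) * conj (deriv g (t * exp (θ * I))) *
    conj (exp (θ * I)) - t ^ 2 * deriv f (t * exp (θ * I)) * exp (θ * I) *
      conj (g (t * exp (θ * I)))) * I_sq

theorem sq_smul_circleAverage_mul_conj {f g : ℂ → ℂ} {R r : ℝ}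
    (hf : DifferentiableOn ℂ f (ball 0 R)) (hg : DifferentiableOn ℂ g (ball 0 R))
    (hr0 : 0 ≤ r) (hr : r < R) :
    r ^ 2 • circleAverage (fun z => f z * conj (g z)) 0 r =
      ∫ t in 0..r, (2 * t) • circleAverage (fun z => (f z + z * deriv f z) * conj (g z)) 0 t := by
  have hmaps : MapsTo (fun p : ℝ × ℝ => circleMap 0 p.1 p.2) (Icc 0 r ×ˢ Icc 0 (2 * π))
      (ball 0 R) := by
    rintro ⟨t, θ⟩ ⟨⟨ht0, htr⟩, -⟩
    simpa [abs_of_nonneg ht0] using htr.trans_lt hr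
  have hdiff : ∀ {h : ℂ → ℂ}, DifferentiableOn ℂ h (ball 0 R) →
      ∀ t ∈ Icc 0 r, ∀ θ ∈ Icc 0 (2 * π), DifferentiableAt ℂ h (circleMap 0 t θ) :=
    fun hh t ht θ hθ =>
      hh.differentiableAt (isOpen_ball.mem_nhds (hmaps (x := (t, θ)) ⟨ht, hθ⟩))
  have hfc := hf.continuousOn
  have hgc := hg.continuousOn
  have hf'c := (hf.deriv isOpen_ball).continuousOn
  have hg'c := (hg.deriv isOpen_ball).continuousOn
  have key := intervalIntegral_sub_eq_integral_integral_of_hasDerivAt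
    (Ψ := fun t θ => t • (I * (f (circleMap 0 t θ) * conj (g (circleMap 0 t θ))))) hr0
    two_pi_pos.le
    (fun t ht θ hθ => hasDerivAt_sq_smul_mul_conj_comp_circleMap (hdiff hf t ht θ hθ)
      (hdiff hg t ht θ hθ))
    (fun t ht θ hθ => (((hasDerivAt_comp_circleMap_angle (hdiff hf t ht θ hθ)).mul
      (hasDerivAt_comp_circleMap_angle (hdiff hg t ht θ hθ)).star).const_mul I).const_smul t)
    (fun t _ => by simp only [(periodic_circleMap 0 t).eq])
    (by fun_prop (disch := assumption)) (by fun_prop (disch := assumption))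
  simp only [circleAverage_def, ← intervalIntegral.integral_smul, smul_comm _ (2 * π)⁻¹]
  simpa [intervalIntegral.integral_smul, smul_comm _ (2 * π)⁻¹] using
    congrArg ((2 * π)⁻¹ • ·) key

theorem integral_ball_mul_conj_eq {f g : ℂ → ℂ} {R r : ℝ}
    (hf : DifferentiableOn ℂ f (ball 0 R)) (hg : DifferentiableOn ℂ g (ball 0 R))
    (hr0 : 0 ≤ r) (hr : r < R) :
    ∫ z in ball 0 r, (f z + z * deriv f z) * conj (g z) =
      (π * r ^ 2) • circleAverage (fun z => f z * conj (g z)) 0 r := by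
  have hsub : closedBall (0 : ℂ) r ⊆ ball 0 R := closedBall_subset_ball hr
  have hfc := hf.continuousOn.mono hsub
  have hgc := hg.continuousOn.mono hsub
  have hf'c := (hf.deriv isOpen_ball).continuousOn.mono hsub
  rw [integral_ball_eq_intervalIntegral_circleAverage hr0 (by fun_prop), mul_smul,
    sq_smul_circleAverage_mul_conj hf hg hr0 hr, ← intervalIntegral.integral_smul]
  congr 1 with t
  rw [smul_smul, mul_assoc, mul_left_comm]

theorem circlePairing_eq_circleAverage (f g : ℂ → ℂ) (r : ℝ) :
    circlePairing f g r = circleAverage (fun z => f z * conj (g z)) 0 r := by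
  simp only [circlePairing, circleAverage_def, circleMap_zero]

theorem volume_restrict_ball_eq_smul_discMeasure :
    volume.restrict (ball (0 : ℂ) 1) = ENNReal.ofReal π • discMeasure := by
  rw [discMeasure, smul_smul, ENNReal.mul_inv_cancel (by simp [pi_pos]) ENNReal.ofReal_ne_top,
    one_smul]

instance : IsProbabilityMeasure discMeasure := by
  constructor
  rw [discMeasure, Measure.smul_apply, Measure.restrict_apply_univ, Complex.volume_ball,
    smul_eq_mul]
  simp only [← NNReal.coe_real_pi, ENNReal.ofReal_coe_nnreal, ENNReal.ofReal_one, one_pow,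
    one_mul]
  exact ENNReal.inv_mul_cancel (by simp [NNReal.pi_pos.ne']) ENNReal.coe_ne_top

theorem ae_norm_le_one_discMeasure : ∀ᵐ z ∂discMeasure, ‖z‖ ≤ 1 := by
  rw [discMeasure]
  exact Measure.ae_smul_measure ((ae_restrict_mem measurableSet_ball).mono
    fun z hz => (mem_ball_zero_iff.mp hz).le) _

theorem setIntegral_norm_le_pi_mul_eLpNorm_one {E : Type*} [NormedAddCommGroup E] {h : ℂ → E}
    {s : Set ℂ} (hs : s ⊆ ball 0 1) (hh : Integrable h discMeasure) :
    ∫ z in s, ‖h z‖ ≤ π * (eLpNorm h 1 discMeasure).toReal := by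
  have hball : IntegrableOn h (ball 0 1) := by
    rw [IntegrableOn, volume_restrict_ball_eq_smul_discMeasure]
    exact hh.smul_measure ENNReal.ofReal_ne_top
  calc ∫ z in s, ‖h z‖ ≤ ∫ z in ball 0 1, ‖h z‖ :=
        setIntegral_mono_set hball.norm (.of_forall fun _ => norm_nonneg _) hs.eventuallyLE
    _ = π * (eLpNorm h 1 discMeasure).toReal := by
        rw [volume_restrict_ball_eq_smul_discMeasure, integral_smul_measure,
          ENNReal.toReal_ofReal pi_pos.le, integral_norm_eq_lintegral_enorm hh.1,
          eLpNorm_one_eq_lintegral_enorm, smul_eq_mul]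

theorem norm_le_four_mul_eLpNorm_one {E : Type*} [NormedAddCommGroup E] [NormedSpace ℂ E]
    [CompleteSpace E] {h : ℂ → E} (hh : DifferentiableOn ℂ h (ball 0 1))
    (hi : Integrable h discMeasure) {w : ℂ} (hw : ‖w‖ < 1 / 2) :
    ‖h w‖ ≤ 4 * (eLpNorm h 1 discMeasure).toReal := by
  have hsub : closedBall w (1 / 2) ⊆ ball 0 1 := fun z hz => by
    rw [mem_closedBall, dist_eq_norm] at hz
    rw [mem_ball_zero_iff]
    calc ‖z‖ ≤ ‖z - w‖ + ‖w‖ := norm_le_norm_sub_add z w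
      _ < 1 := by linarith
  calc ‖h w‖ ≤ (π * (1 / 2) ^ 2)⁻¹ * ∫ z in ball w (1 / 2), ‖h z‖ :=
        (hh.diffContOnCl_ball hsub).norm_le_integral_ball (by norm_num)
    _ ≤ (π * (1 / 2) ^ 2)⁻¹ * (π * (eLpNorm h 1 discMeasure).toReal) := by
        gcongr
        exact setIntegral_norm_le_pi_mul_eLpNorm_one (ball_subset_closedBall.trans hsub) hi
    _ = 4 * (eLpNorm h 1 discMeasure).toReal := by
        field_simp
        ring

theorem norm_circlePairing_le_of_abs_lt_half {f g : ℂ → ℂ}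
    (hf : DifferentiableOn ℂ f (ball 0 1)) (hg : DifferentiableOn ℂ g (ball 0 1))
    (hfi : Integrable f discMeasure) (hgi : Integrable g discMeasure) {r : ℝ}
    (hr : |r| < 1 / 2) :
    ‖circlePairing f g r‖ ≤
      16 * (eLpNorm f 1 discMeasure).toReal * (eLpNorm g 1 discMeasure).toReal := by
  rw [circlePairing_eq_circleAverage]
  refine norm_circleAverage_le fun z hz => ?_
  have hz' : ‖z‖ < 1 / 2 := by rwa [mem_sphere_zero_iff_norm.mp hz]
  rw [norm_mul, Complex.norm_conj, mul_assoc, show (16 : ℝ) = 4 * 4 by norm_num,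
    mul_mul_mul_comm]
  exact mul_le_mul (norm_le_four_mul_eLpNorm_one hf hfi hz')
    (norm_le_four_mul_eLpNorm_one hg hgi hz') (norm_nonneg _) (by positivity)

section Sobolev

variable {μ : Measure ℂ} {p : ℝ≥0∞} {u v : ℂ → ℂ}

theorem ae_norm_id_mul_le (hμ : ∀ᵐ z ∂μ, ‖z‖ ≤ 1) : ∀ᵐ z ∂μ, ‖z * v z‖ ≤ ‖v z‖ :=
  hμ.mono fun z hz => by
    rw [norm_mul]
    exact mul_le_of_le_one_left (norm_nonneg _) hz

theorem memLp_add_id_mul (hu : MemLp u p μ) (hv : MemLp v p μ) (hμ : ∀ᵐ z ∂μ, ‖z‖ ≤ 1) :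
    MemLp (fun z => u z + z * v z) p μ :=
  hu.add (hv.of_le (aestronglyMeasurable_id.mul hv.1) (ae_norm_id_mul_le hμ))

theorem toReal_eLpNorm_add_id_mul_le (hu : MemLp u p μ) (hv : MemLp v p μ)
    (hμ : ∀ᵐ z ∂μ, ‖z‖ ≤ 1) (hp : 1 ≤ p) :
    (eLpNorm (fun z => u z + z * v z) p μ).toReal ≤
      (eLpNorm u p μ).toReal + (eLpNorm v p μ).toReal := by
  rw [← ENNReal.toReal_add hu.eLpNorm_ne_top hv.eLpNorm_ne_top]
  refine ENNReal.toReal_mono (by finiteness [hu.eLpNorm_ne_top, hv.eLpNorm_ne_top]) ?_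
  exact (eLpNorm_add_le hu.1 (aestronglyMeasurable_id.mul hv.1) hp).trans
    (add_le_add le_rfl (eLpNorm_mono_ae (ae_norm_id_mul_le hμ)))

end Sobolev

theorem norm_circlePairing_le {f g : ℂ → ℂ} {P Q : ℝ≥0∞} [P.HolderConjugate Q]
    (hf : DifferentiableOn ℂ f (ball 0 1)) (hg : DifferentiableOn ℂ g (ball 0 1))
    (hF : MemLp (fun z => f z + z * deriv f z) P discMeasure) (hgQ : MemLp g Q discMeasure)
    {r : ℝ} (hr0 : 0 < r) (hr1 : r < 1) :
    ‖circlePairing f g r‖ ≤ (r ^ 2)⁻¹ *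
      (eLpNorm (fun z => f z + z * deriv f z) P discMeasure).toReal *
        (eLpNorm g Q discMeasure).toReal := by
  set F := fun z => f z + z * deriv f z
  have hHolder : eLpNorm (fun z => F z * conj (g z)) 1 discMeasure ≤
      eLpNorm F P discMeasure * eLpNorm g Q discMeasure := by
    simpa using eLpNorm_le_eLpNorm_mul_eLpNorm'_of_norm hF.1 hgQ.1 (fun a b => a * conj b) 1
      (.of_forall fun z => by simp)
  have hint : Integrable (fun z => F z * conj (g z)) discMeasure :=
    memLp_one_iff_integrable.mp ⟨hF.1.mul (continuous_conj.comp_aestronglyMeasurable hgQ.1),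
      hHolder.trans_lt (ENNReal.mul_lt_top hF.eLpNorm_lt_top hgQ.eLpNorm_lt_top)⟩
  have hpair : ‖∫ z in ball 0 r, F z * conj (g z)‖ = π * r ^ 2 * ‖circlePairing f g r‖ := by
    rw [integral_ball_mul_conj_eq hf hg hr0.le hr1, circlePairing_eq_circleAverage, norm_smul,
      Real.norm_of_nonneg (by positivity)]
  have hnorm : (eLpNorm (fun z => F z * conj (g z)) 1 discMeasure).toReal ≤
      (eLpNorm F P discMeasure).toReal * (eLpNorm g Q discMeasure).toReal := by
    rw [← ENNReal.toReal_mul]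
    exact ENNReal.toReal_mono (ENNReal.mul_ne_top hF.eLpNorm_ne_top hgQ.eLpNorm_ne_top) hHolder
  calc ‖circlePairing f g r‖ = (π * r ^ 2)⁻¹ * ‖∫ z in ball 0 r, F z * conj (g z)‖ := by
        rw [hpair]
        field_simp
    _ ≤ (π * r ^ 2)⁻¹ * ∫ z in ball 0 r, ‖F z * conj (g z)‖ := by
        gcongr
        exact norm_integral_le_integral_norm _
    _ ≤ (π * r ^ 2)⁻¹ * (π * (eLpNorm (fun z => F z * conj (g z)) 1 discMeasure).toReal) := by
        gcongr
        exact setIntegral_norm_le_pi_mul_eLpNorm_one (ball_subset_ball hr1.le) hint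
    _ ≤ (π * r ^ 2)⁻¹ *
          (π * ((eLpNorm F P discMeasure).toReal * (eLpNorm g Q discMeasure).toReal)) := by
        gcongr
    _ = (r ^ 2)⁻¹ * (eLpNorm F P discMeasure).toReal * (eLpNorm g Q discMeasure).toReal := by
        field_simp

/-- The Cauchy `H²`-pairing with a Bergman `L^q_a` function induces a bounded linear
functional on the analytic Sobolev space `W^{1,p}_a`, `1 < p < ∞`, `q = p/(p−1)`. -/
theorem sobolev_bergman_pairing_bound (p q : ℝ) (hp : 1 < p) (hq : q = p / (p - 1)) :
    ∃ C > (0:ℝ), ∀ f g : ℂ → ℂ,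
      DifferentiableOn ℂ f (ball (0:ℂ) 1) →
      MemLp f (ENNReal.ofReal p) discMeasure →
      MemLp (deriv f) (ENNReal.ofReal p) discMeasure →
      DifferentiableOn ℂ g (ball (0:ℂ) 1) →
      MemLp g (ENNReal.ofReal q) discMeasure →
      ∀ r : ℝ, 0 < r → r < 1 →
        ‖circlePairing f g r‖ ≤
          C * ((eLpNorm f (ENNReal.ofReal p) discMeasure).toReal +
               (eLpNorm (deriv f) (ENNReal.ofReal p) discMeasure).toReal) *
            (eLpNorm g (ENNReal.ofReal q) discMeasure).toReal := by
  have hpq : (ENNReal.ofReal p).HolderConjugate (ENNReal.ofReal q) := by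
    rw [hq]
    exact (Real.HolderConjugate.conjExponent hp).ennrealOfReal
  have hP : 1 ≤ ENNReal.ofReal p := ENNReal.one_le_ofReal.mpr hp.le
  have hQ : 1 ≤ ENNReal.ofReal q := hpq.symm.one_le
  refine ⟨16, by norm_num, fun f g hf hfp hf'p hg hgq r hr0 hr1 => ?_⟩
  have hf1 :=
    ENNReal.toReal_mono hfp.eLpNorm_ne_top (eLpNorm_le_eLpNorm_of_exponent_le hP hfp.1)
  have hg1 :=
    ENNReal.toReal_mono hgq.eLpNorm_ne_top (eLpNorm_le_eLpNorm_of_exponent_le hQ hgq.1)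
  have hF := toReal_eLpNorm_add_id_mul_le hfp hf'p ae_norm_le_one_discMeasure hP
  rcases lt_or_ge r (1 / 2) with hr | hr
  · calc ‖circlePairing f g r‖
        ≤ 16 * (eLpNorm f 1 discMeasure).toReal * (eLpNorm g 1 discMeasure).toReal :=
          norm_circlePairing_le_of_abs_lt_half hf hg (hfp.integrable hP) (hgq.integrable hQ)
            (by rwa [abs_of_pos hr0])
      _ ≤ _ := by
          gcongr
          exact le_add_of_le_of_nonneg hf1 ENNReal.toReal_nonneg
  · calc ‖circlePairing f g r‖
        ≤ (r ^ 2)⁻¹ *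
            (eLpNorm (fun z => f z + z * deriv f z) (ENNReal.ofReal p) discMeasure).toReal *
              (eLpNorm g (ENNReal.ofReal q) discMeasure).toReal :=
          norm_circlePairing_le hf hg (memLp_add_id_mul hfp hf'p ae_norm_le_one_discMeasure) hgq
            hr0 hr1
      _ ≤ 16 * _ * _ := by
          gcongr
          calc (r ^ 2)⁻¹ ≤ ((1 / 2) ^ 2)⁻¹ := by gcongr
            _ ≤ 16 := by norm_num
end
end
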